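/- arXiv:2310.07474 — 3 statements merged into one kernel-verified Lean document; each statement's English description precedes it below -/
import Mathlib

section
/- Let I and J be ideals of a left skew brace B. Then the commutator ideal [I,J]^B (the ideal of B generated by X_{I,J} = [I,J]_+ ∪ [I,J]_· ∪ {i·j − (i+j) : i ∈ I, j ∈ J}) equals ⟦I,J⟧^B, the ideal of B generated by the set {p(i,j) : i ∈ I, j ∈ J, p an absorbing 2-polynomial of B}. -/
universe u

/-- A left skew brace: a set with two group structures `(B,+)` and `(B,·)` sharing the
same identity element, satisfying `a·(b+c) = a·b - a + a·c`. -/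
class SkewBrace (B : Type u) extends AddGroup B, Group B where
  zero_eq_one : (0 : B) = 1
  skew_distrib : ∀ a b c : B, a * (b + c) = a * b + (-a + a * c)

namespace SkewBrace

variable {B : Type u} [SkewBrace B]

/-- The star product `a ∗ b = -a + a·b - b`. -/
def sbStar (a b : B) : B := -a + a * b + -b

/-- The additive commutator `[a,b]₊ = -a - b + a + b`. -/
def addCommutator (a b : B) : B := -a + -b + a + b

/-- The multiplicative commutator `[a,b]· = a⁻¹b⁻¹ab`. -/
def mulCommutator (a b : B) : B := a⁻¹ * b⁻¹ * a * b

/-- A subbrace: a subset that is a subgroup of both `(B,+)` and `(B,·)`. -/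
structure IsSubbrace (S : Set B) : Prop where
  zero_mem : (0 : B) ∈ S
  add_mem : ∀ ⦃a b : B⦄, a ∈ S → b ∈ S → a + b ∈ S
  neg_mem : ∀ ⦃a : B⦄, a ∈ S → -a ∈ S
  mul_mem : ∀ ⦃a b : B⦄, a ∈ S → b ∈ S → a * b ∈ S
  inv_mem : ∀ ⦃a : B⦄, a ∈ S → a⁻¹ ∈ S

/-- `J` is an ideal of the subbrace `S`: a subbrace of `S`, normal in `(S,+)` and
`(S,·)`, with `S ∗ J ⊆ J` and `J ∗ S ⊆ J`. -/
structure IsIdealIn (S J : Set B) : Prop where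
  subset : J ⊆ S
  isSubbrace : IsSubbrace J
  add_conj_mem : ∀ ⦃b : B⦄, b ∈ S → ∀ ⦃a : B⦄, a ∈ J → b + a + -b ∈ J
  mul_conj_mem : ∀ ⦃b : B⦄, b ∈ S → ∀ ⦃a : B⦄, a ∈ J → b * a * b⁻¹ ∈ J
  star_mem_left : ∀ ⦃b : B⦄, b ∈ S → ∀ ⦃a : B⦄, a ∈ J → sbStar b a ∈ J
  star_mem_right : ∀ ⦃a : B⦄, a ∈ J → ∀ ⦃b : B⦄, b ∈ S → sbStar a b ∈ J

/-- An ideal of the brace `B`. -/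
def IsIdeal (J : Set B) : Prop := IsIdealIn (Set.univ : Set B) J

/-- A left ideal: a subbrace `L` with `B ∗ L ⊆ L`. -/
structure IsLeftIdeal (L : Set B) : Prop where
  isSubbrace : IsSubbrace L
  star_mem_left : ∀ (b : B), ∀ ⦃a : B⦄, a ∈ L → sbStar b a ∈ L

/-- The ideal of `B` generated by a subset `E`. -/
def idealClosure (E : Set B) : Set B := ⋂₀ {I : Set B | IsIdeal I ∧ E ⊆ I}

/-- The subbrace of `B` generated by a subset `E`. -/
def subbraceClosure (E : Set B) : Set B := ⋂₀ {S : Set B | IsSubbrace S ∧ E ⊆ S}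

/-- The set `X_{I,J} = [I,J]₊ ∪ [I,J]· ∪ {i·j - (i+j) : i ∈ I, j ∈ J}`. -/
def commSet (I J : Set B) : Set B :=
  (AddSubgroup.closure {x : B | ∃ i ∈ I, ∃ j ∈ J, x = addCommutator i j} : Set B) ∪
    (Subgroup.closure {x : B | ∃ i ∈ I, ∃ j ∈ J, x = mulCommutator i j} : Set B) ∪
    {x : B | ∃ i ∈ I, ∃ j ∈ J, x = i * j + -(i + j)}

/-- The commutator ideal `[I,J]^B`: the ideal of `B` generated by `X_{I,J}`. -/
def commIdeal (I J : Set B) : Set B := idealClosure (commSet I J)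

/-- The set `X ∗ Y = {x ∗ y : x ∈ X, y ∈ Y}`. -/
def starSet (X Y : Set B) : Set B := {z : B | ∃ x ∈ X, ∃ y ∈ Y, z = sbStar x y}

/-- The centre of the subbrace `S`. -/
def centreIn (S : Set B) : Set B :=
  {a ∈ S | ∀ b ∈ S, a + b = b + a ∧ a + b = a * b ∧ a + b = b * a}

/-- The centre `ζ(B)` of the brace `B`. -/
def centre (B : Type u) [SkewBrace B] : Set B := centreIn (Set.univ : Set B)

/-- For ideals `J ≤ I` of the subbrace `S`: `I/J` is a central factor of `S`,
i.e. `I/J ≤ ζ(S/J)`. -/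
def IsCentralFactorIn (S J I : Set B) : Prop :=
  ∀ ⦃a : B⦄, a ∈ I → ∀ ⦃b : B⦄, b ∈ S →
    -(a + b) + (b + a) ∈ J ∧ -(a + b) + a * b ∈ J ∧ -(a + b) + b * a ∈ J

/-- The subbrace `S` is centrally nilpotent of class at most `n`: there is a chain of
ideals `0 = I₀ ≤ I₁ ≤ … ≤ Iₙ = S` of `S` with `I_{k+1}/I_k ≤ ζ(S/I_k)`. -/
def CentrallyNilpotentInOfClassLE (S : Set B) (n : ℕ) : Prop :=
  ∃ I : ℕ → Set B, I 0 = {0} ∧ I n = S ∧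
    (∀ k ≤ n, IsIdealIn S (I k)) ∧
    (∀ k < n, I k ⊆ I (k + 1)) ∧
    (∀ k < n, IsCentralFactorIn S (I k) (I (k + 1)))

/-- The subbrace `S` is centrally nilpotent. -/
def CentrallyNilpotentIn (S : Set B) : Prop := ∃ n : ℕ, CentrallyNilpotentInOfClassLE S n

/-- The brace `B` is centrally nilpotent. -/
def CentrallyNilpotent (B : Type u) [SkewBrace B] : Prop :=
  CentrallyNilpotentIn (Set.univ : Set B)

/-- The brace `B` is locally centrally-nilpotent: every finitely generated subbrace is
centrally nilpotent. -/
def LocallyCentrallyNilpotent (B : Type u) [SkewBrace B] : Prop :=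
  ∀ E : Finset B, CentrallyNilpotentIn (subbraceClosure (E : Set B))

/-- The (finite) upper central series of `B`: `ζ₀(B) = 0` and
`ζ_{n+1}(B)/ζ_n(B) = ζ(B/ζ_n(B))`. -/
def zetaNat (B : Type u) [SkewBrace B] : ℕ → Set B
  | 0 => {0}
  | n + 1 =>
    {a : B | ∀ b : B, -(a + b) + (b + a) ∈ zetaNat B n ∧
      -(a + b) + a * b ∈ zetaNat B n ∧ -(a + b) + b * a ∈ zetaNat B n}

/-- The transfinite upper central series of `B`. -/
noncomputable def zetaOrd (B : Type u) [SkewBrace B] (o : Ordinal.{u}) : Set B :=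
  Ordinal.limitRecOn o ({0} : Set B)
    (fun _ Z =>
      {a : B | ∀ b : B, -(a + b) + (b + a) ∈ Z ∧ -(a + b) + a * b ∈ Z ∧ -(a + b) + b * a ∈ Z})
    (fun o _ ih => ⋃ (β : {β : Ordinal.{u} // β < o}), ih β.1 β.2)

/-- The brace `B` is hypercentral: the upper central series reaches `B`. -/
def Hypercentral (B : Type u) [SkewBrace B] : Prop :=
  ∃ o : Ordinal.{u}, zetaOrd B o = Set.univ

/-- The largest ideal of `B` contained in `C`. -/
def idealCore (C : Set B) : Set B := ⋃₀ {I : Set B | IsIdeal I ∧ I ⊆ C}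

/-- The lower `B`-central series of an ideal `I`:
`lowerCentralB I n = Γ_{n+1}(I)^B`, so `Γ₁(I)^B = I` and `Γ_{n+1}(I)^B = [Γ_n(I)^B, I]^B`. -/
def lowerCentralB (I : Set B) : ℕ → Set B
  | 0 => I
  | n + 1 => commIdeal (lowerCentralB I n) I

/-- `I` is a `B`-centrally nilpotent ideal. -/
def BCentrallyNilpotent (I : Set B) : Prop := ∃ n : ℕ, lowerCentralB I n = {0}

/-- The derived series of an ideal with respect to `B`. -/
def derivedB (I : Set B) : ℕ → Set B
  | 0 => I
  | n + 1 => commIdeal (derivedB I n) (derivedB I n)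

/-- The preimages in `B` of the derived series of `I/F` with respect to `B/F`. -/
def derivedModB (F I : Set B) : ℕ → Set B
  | 0 => I
  | n + 1 => idealClosure (commSet (derivedModB F I n) (derivedModB F I n) ∪ F)

/-- The Fitting ideal of `B`: the ideal generated by all `B`-centrally nilpotent ideals. -/
def FitIdeal (B : Type u) [SkewBrace B] : Set B :=
  idealClosure (⋃₀ {I : Set B | IsIdeal I ∧ BCentrallyNilpotent I})

/-- The centraliser of an ideal `I`: the largest ideal `C` with `[C,I]^B = 0`. -/
def idealCentraliser (I : Set B) : Set B :=
  ⋃₀ {C : Set B | IsIdeal C ∧ commIdeal C I ⊆ {0}}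

/-- The centraliser of a chief factor `Itop/Ibot`: the largest ideal `C` of `B` with
`[C, Itop]^B ≤ Ibot`. -/
def factorCentraliser (Itop Ibot : Set B) : Set B :=
  ⋃₀ {C : Set B | IsIdeal C ∧ commIdeal C Itop ⊆ Ibot}

/-- A maximal left ideal of `B`. -/
def IsMaximalLeftIdeal (L : Set B) : Prop :=
  IsLeftIdeal L ∧ L ≠ Set.univ ∧
    ∀ L' : Set B, IsLeftIdeal L' → L ⊆ L' → L' = L ∨ L' = Set.univ

/-- The Frattini ideal of `B`. -/
def FratIdeal (B : Type u) [SkewBrace B] : Set B :=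
  (⋂₀ {L : Set B | IsMaximalLeftIdeal L}) ∩ FitIdeal B

/-- The additive torsion set `T₊(B)`. -/
def addTorsion (B : Type u) [SkewBrace B] : Set B := {a : B | ∃ n : ℕ, 0 < n ∧ n • a = 0}

/-- The multiplicative torsion set `T·(B)`. -/
def mulTorsion (B : Type u) [SkewBrace B] : Set B := {a : B | ∃ n : ℕ, 0 < n ∧ a ^ n = 1}

/-- The order of an element of a brace: the cardinality of the subbrace it generates
(`0` if infinite). -/
noncomputable def elemOrder (a : B) : ℕ := Nat.card ↥(subbraceClosure ({a} : Set B))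

/-- `a` is a `π`-element: it is periodic and its order is a `π`-number. -/
def IsPiElement (π : Set ℕ) (a : B) : Prop :=
  0 < elemOrder a ∧ ∀ p : ℕ, p.Prime → p ∣ elemOrder a → p ∈ π

/-- The order of the coset `a + J` in the quotient brace modulo the ideal `J`:
the number of cosets of `J` in the subbrace generated by `a` together with `J`. -/
noncomputable def elemOrderMod (J : Set B) (a : B) : ℕ :=
  Nat.card ↥((fun x : B => {y : B | -x + y ∈ J}) '' subbraceClosure ({a} ∪ J))

/-- The coset of `a` modulo the ideal `J` is a `π`-element of the quotient brace. -/
def IsPiElementMod (π : Set ℕ) (J : Set B) (a : B) : Prop :=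
  0 < elemOrderMod J a ∧ ∀ p : ℕ, p.Prime → p ∣ elemOrderMod J a → p ∈ π

/-- A subideal: a finite chain `S = C₀ ⊴ C₁ ⊴ … ⊴ Cₙ = B`. -/
def IsSubideal (S : Set B) : Prop :=
  ∃ (n : ℕ) (C : ℕ → Set B), C 0 = S ∧ C n = Set.univ ∧
    (∀ k ≤ n, IsSubbrace (C k)) ∧ ∀ k < n, IsIdealIn (C (k + 1)) (C k)

/-- An ascendant subbrace: an ordinal-indexed ascending chain from `S` to `B`. -/
def IsAscendant (S : Set B) : Prop :=
  ∃ (l : Ordinal.{u}) (C : Ordinal.{u} → Set B), C 0 = S ∧ C l = Set.univ ∧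
    (∀ α ≤ l, IsSubbrace (C α)) ∧
    (∀ α < l, IsIdealIn (C (α + 1)) (C α)) ∧
    ∀ μ ≤ l, Order.IsSuccLimit μ → C μ = ⋃ β < μ, C β

/-- A serial subbrace: there is a complete chain of subbraces containing `S` and `B`
in which each member is an ideal of its immediate successor. -/
def IsSerial (S : Set B) : Prop :=
  ∃ 𝒞 : Set (Set B), S ∈ 𝒞 ∧ Set.univ ∈ 𝒞 ∧
    (∀ D ∈ 𝒞, IsSubbrace D) ∧
    (∀ D ∈ 𝒞, ∀ E ∈ 𝒞, D ⊆ E ∨ E ⊆ D) ∧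
    (∀ 𝒟 ⊆ 𝒞, 𝒟.Nonempty → ⋃₀ 𝒟 ∈ 𝒞 ∧ ⋂₀ 𝒟 ∈ 𝒞) ∧
    ∀ D ∈ 𝒞, ∀ E ∈ 𝒞, D ⊂ E → (∀ F ∈ 𝒞, ¬(D ⊂ F ∧ F ⊂ E)) → IsIdealIn E D

/-- `S` is a maximal `p`-subgroup of `(B,+)`. -/
def IsMaxAddPSubgroup (p : ℕ) (S : AddSubgroup B) : Prop :=
  (∀ a ∈ S, ∃ k : ℕ, p ^ k • a = 0) ∧
    ∀ T : AddSubgroup B, (∀ a ∈ T, ∃ k : ℕ, p ^ k • a = 0) → S ≤ T → T = S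

/-- `S` is a maximal `p`-subgroup of `(B,·)`. -/
def IsMaxMulPSubgroup (p : ℕ) (S : Subgroup B) : Prop :=
  (∀ a ∈ S, ∃ k : ℕ, a ^ p ^ k = 1) ∧
    ∀ T : Subgroup B, (∀ a ∈ T, ∃ k : ℕ, a ^ p ^ k = 1) → S ≤ T → T = S

/-- Formal 2-polynomials of a brace: terms in two variables built from `+`, `-`, `·`,
inverse and the constant `0`. -/
inductive Poly2 : Type
  | X : Poly2
  | Y : Poly2
  | zero : Poly2
  | add : Poly2 → Poly2 → Poly2
  | neg : Poly2 → Poly2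
  | mul : Poly2 → Poly2 → Poly2
  | inv : Poly2 → Poly2

/-- Evaluation of a formal 2-polynomial in a brace. -/
def Poly2.eval : Poly2 → B → B → B
  | .X, a, _ => a
  | .Y, _, b => b
  | .zero, _, _ => 0
  | .add p q, a, b => p.eval a b + q.eval a b
  | .neg p, a, b => -(p.eval a b)
  | .mul p q, a, b => p.eval a b * q.eval a b
  | .inv p, a, b => (p.eval a b)⁻¹

/-- A 2-polynomial is absorbing if it vanishes whenever one variable is `0`. -/
def Poly2.Absorbing (p : Poly2) (B : Type u) [SkewBrace B] : Prop :=
  (∀ x : B, p.eval x (0 : B) = 0) ∧ ∀ y : B, p.eval (0 : B) y = 0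

end SkewBrace

open SkewBrace

section Aux

variable {B : Type u} [SkewBrace B]

lemma sb_isIdeal_sInter {S : Set (Set B)} (h : ∀ T ∈ S, IsIdeal T) :
    IsIdeal (⋂₀ S) := by
  refine ⟨Set.subset_univ _, ⟨?_, ?_, ?_, ?_, ?_⟩, ?_, ?_, ?_, ?_⟩
  · exact fun T hT => (h T hT).isSubbrace.zero_mem
  · exact fun a b ha hb T hT =>
      (h T hT).isSubbrace.add_mem (ha T hT) (hb T hT)
  · exact fun a ha T hT => (h T hT).isSubbrace.neg_mem (ha T hT)
  · exact fun a b ha hb T hT =>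
      (h T hT).isSubbrace.mul_mem (ha T hT) (hb T hT)
  · exact fun a ha T hT => (h T hT).isSubbrace.inv_mem (ha T hT)
  · exact fun b _ a ha T hT =>
      (h T hT).add_conj_mem (Set.mem_univ b) (ha T hT)
  · exact fun b _ a ha T hT =>
      (h T hT).mul_conj_mem (Set.mem_univ b) (ha T hT)
  · exact fun b _ a ha T hT =>
      (h T hT).star_mem_left (Set.mem_univ b) (ha T hT)
  · exact fun a ha b _ T hT =>
      (h T hT).star_mem_right (ha T hT) (Set.mem_univ b)

lemma sb_isIdeal_idealClosure (E : Set B) : IsIdeal (idealClosure E) :=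
  sb_isIdeal_sInter fun _ hT => hT.1

lemma sb_subset_idealClosure (E : Set B) : E ⊆ idealClosure E :=
  fun x hx T hT => hT.2 hx

lemma sb_idealClosure_min {E T : Set B} (hT : IsIdeal T) (hE : E ⊆ T) :
    idealClosure E ⊆ T := fun x hx => hx T ⟨hT, hE⟩

lemma sb_neg_add_mul (a k : B) : -a + a * k = sbStar a k + k := by
  simp [sbStar, add_assoc]

/-- Congruence modulo an ideal. -/
def sbRel (K : Set B) (x y : B) : Prop := -x + y ∈ K

section RelLemmas

variable {K : Set B} (hK : IsIdeal K)

include hK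

lemma sbRel.refl (x : B) : sbRel K x x := by
  unfold sbRel; rw [neg_add_cancel]; exact hK.isSubbrace.zero_mem

lemma sbRel.symm {x y : B} (h : sbRel K x y) : sbRel K y x := by
  have := hK.isSubbrace.neg_mem h
  simpa [sbRel, neg_add_rev] using this

lemma sbRel.trans {x y z : B} (h1 : sbRel K x y) (h2 : sbRel K y z) :
    sbRel K x z := by
  have := hK.isSubbrace.add_mem h1 h2
  simpa [sbRel, add_assoc] using this

lemma sbRel.add {x x' y y' : B} (h1 : sbRel K x x') (h2 : sbRel K y y') :
    sbRel K (x + y) (x' + y') := by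
  have hc : -y + (-x + x') + -(-y) ∈ K :=
    hK.add_conj_mem (Set.mem_univ (-y)) h1
  have := hK.isSubbrace.add_mem hc h2
  simpa [sbRel, neg_add_rev, add_assoc] using this

lemma sbRel.neg {x y : B} (h : sbRel K x y) : sbRel K (-x) (-y) := by
  have h2 : -y + x ∈ K := by
    have := hK.isSubbrace.neg_mem h
    simpa [neg_add_rev] using this
  have hc : x + (-y + x) + -x ∈ K := hK.add_conj_mem (Set.mem_univ x) h2
  simpa [sbRel, add_assoc] using hc

lemma sbRel.iff_mul {x y : B} : sbRel K x y ↔ x⁻¹ * y ∈ K := by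
  constructor
  · intro h
    have hy : y = x + (-x + y) := by simp
    have hd : x⁻¹ * (x + (-x + y)) = x⁻¹ * x + (-x⁻¹ + x⁻¹ * (-x + y)) :=
      SkewBrace.skew_distrib x⁻¹ x (-x + y)
    have hx1 : x⁻¹ * x = (0 : B) := by
      rw [inv_mul_cancel, SkewBrace.zero_eq_one]
    have : x⁻¹ * y = -x⁻¹ + x⁻¹ * (-x + y) := by
      rw [← hy] at hd; rw [hd, hx1, zero_add]
    rw [this, sb_neg_add_mul]
    exact hK.isSubbrace.add_mem
      (hK.star_mem_left (Set.mem_univ x⁻¹) h) h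
  · intro h
    have hy : y = x * (x⁻¹ * y) := by group
    have : -x + y = sbStar x (x⁻¹ * y) + (x⁻¹ * y) := by
      rw [← sb_neg_add_mul, ← hy]
    rw [sbRel, this]
    exact hK.isSubbrace.add_mem
      (hK.star_mem_left (Set.mem_univ x) h) h

lemma sbRel.mul {x x' y y' : B} (h1 : sbRel K x x') (h2 : sbRel K y y') :
    sbRel K (x * y) (x' * y') := by
  rw [sbRel.iff_mul hK] at h1 h2 ⊢
  have hc : y⁻¹ * (x⁻¹ * x') * (y⁻¹)⁻¹ ∈ K :=
    hK.mul_conj_mem (Set.mem_univ y⁻¹) h1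
  have hm := hK.isSubbrace.mul_mem hc h2
  have he : (y⁻¹ * (x⁻¹ * x') * (y⁻¹)⁻¹) * (y⁻¹ * y') = (x * y)⁻¹ * (x' * y') := by
    group
  rwa [he] at hm

lemma sbRel.inv {x y : B} (h : sbRel K x y) : sbRel K x⁻¹ y⁻¹ := by
  rw [sbRel.iff_mul hK] at h ⊢
  have h2 : y⁻¹ * x ∈ K := by
    have := hK.isSubbrace.inv_mem h
    simpa [mul_inv_rev] using this
  have hc : x * (y⁻¹ * x) * x⁻¹ ∈ K := hK.mul_conj_mem (Set.mem_univ x) h2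
  have he : x * (y⁻¹ * x) * x⁻¹ = (x⁻¹)⁻¹ * y⁻¹ := by group
  rwa [he] at hc

end RelLemmas

section CommIdeal

variable (I J : Set B)

lemma sb_genAdd {i j : B} (hi : i ∈ I) (hj : j ∈ J) :
    addCommutator i j ∈ commIdeal I J := by
  apply sb_subset_idealClosure
  exact Or.inl (Or.inl (AddSubgroup.subset_closure ⟨i, hi, j, hj, rfl⟩))

lemma sb_genMul {i j : B} (hi : i ∈ I) (hj : j ∈ J) :
    mulCommutator i j ∈ commIdeal I J := by
  apply sb_subset_idealClosure
  exact Or.inl (Or.inr (Subgroup.subset_closure ⟨i, hi, j, hj, rfl⟩))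

lemma sb_genStar {i j : B} (hi : i ∈ I) (hj : j ∈ J) :
    i * j + -(i + j) ∈ commIdeal I J := by
  apply sb_subset_idealClosure
  exact Or.inr ⟨i, hi, j, hj, rfl⟩

variable {I J}

lemma sb_comm_add {a b : B} (ha : a ∈ I) (hb : b ∈ J) :
    sbRel (commIdeal I J) (a + b) (b + a) := by
  have hK : IsIdeal (commIdeal I J) := sb_isIdeal_idealClosure _
  have h := hK.isSubbrace.neg_mem (sb_genAdd I J ha hb)
  have he : -(addCommutator a b) = -(a + b) + (b + a) := by
    simp [SkewBrace.addCommutator, neg_add_rev, add_assoc]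
  rwa [he] at h

lemma sb_comm_mul_add {a b : B} (ha : a ∈ I) (hb : b ∈ J) :
    sbRel (commIdeal I J) (a * b) (a + b) := by
  have hK : IsIdeal (commIdeal I J) := sb_isIdeal_idealClosure _
  refine sbRel.symm hK ?_
  have h := hK.add_conj_mem (Set.mem_univ (-(a + b))) (sb_genStar I J ha hb)
  have he : -(a + b) + (a * b + -(a + b)) + -(-(a + b)) = -(a + b) + a * b := by
    simp [add_assoc]
  rwa [he] at h

lemma sb_comm_mul_comm {a b : B} (ha : a ∈ I) (hb : b ∈ J) :
    sbRel (commIdeal I J) (a * b) (b * a) := by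
  have hK : IsIdeal (commIdeal I J) := sb_isIdeal_idealClosure _
  rw [sbRel.iff_mul hK]
  have h := hK.isSubbrace.inv_mem (sb_genMul I J ha hb)
  have he : (mulCommutator a b)⁻¹ = (a * b)⁻¹ * (b * a) := by
    unfold mulCommutator; group
  rwa [he] at h

lemma sb_key (hI : IsIdeal I) (hJ : IsIdeal J) (p : Poly2) {i j : B}
    (hi : i ∈ I) (hj : j ∈ J) :
    p.eval i (0 : B) ∈ I ∧ p.eval (0 : B) j ∈ J ∧
      sbRel (commIdeal I J) (p.eval i j) (p.eval i (0 : B) + p.eval (0 : B) j) := by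
  have hK : IsIdeal (commIdeal I J) := sb_isIdeal_idealClosure _
  induction p with
  | X =>
    refine ⟨hi, hJ.isSubbrace.zero_mem, ?_⟩
    show -i + (i + 0) ∈ commIdeal I J
    simpa using hK.isSubbrace.zero_mem
  | Y =>
    refine ⟨hI.isSubbrace.zero_mem, hj, ?_⟩
    show -j + (0 + j) ∈ commIdeal I J
    simpa using hK.isSubbrace.zero_mem
  | zero =>
    refine ⟨hI.isSubbrace.zero_mem, hJ.isSubbrace.zero_mem, ?_⟩
    show -(0 : B) + (0 + 0) ∈ commIdeal I J
    simpa using hK.isSubbrace.zero_mem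
  | add p q ihp ihq =>
    obtain ⟨ha, hb, hr⟩ := ihp
    obtain ⟨hc, hd, hs⟩ := ihq
    set a := p.eval i (0 : B)
    set b := p.eval (0 : B) j
    set c := q.eval i (0 : B)
    set d := q.eval (0 : B) j
    refine ⟨hI.isSubbrace.add_mem ha hc, hJ.isSubbrace.add_mem hb hd, ?_⟩
    show sbRel (commIdeal I J) (p.eval i j + q.eval i j) ((a + c) + (b + d))
    have r1 : sbRel (commIdeal I J) (p.eval i j + q.eval i j) ((a + b) + (c + d)) :=
      sbRel.add hK hr hs
    have r2 : sbRel (commIdeal I J) (a + ((b + c) + d)) (a + ((c + b) + d)) :=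
      sbRel.add hK (sbRel.refl hK a)
        (sbRel.add hK (sbRel.symm hK (sb_comm_add hc hb)) (sbRel.refl hK d))
    have e1 : (a + b) + (c + d) = a + ((b + c) + d) := by simp [add_assoc]
    have e2 : (a + c) + (b + d) = a + ((c + b) + d) := by simp [add_assoc]
    rw [e1] at r1
    rw [e2]
    exact sbRel.trans hK r1 r2
  | neg p ihp =>
    obtain ⟨ha, hb, hr⟩ := ihp
    set a := p.eval i (0 : B)
    set b := p.eval (0 : B) j
    refine ⟨hI.isSubbrace.neg_mem ha, hJ.isSubbrace.neg_mem hb, ?_⟩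
    show sbRel (commIdeal I J) (-(p.eval i j)) (-a + -b)
    have r1 : sbRel (commIdeal I J) (-(p.eval i j)) (-b + -a) := by
      have := sbRel.neg hK hr
      rwa [neg_add_rev] at this
    exact sbRel.trans hK r1
      (sbRel.symm hK (sb_comm_add (hI.isSubbrace.neg_mem ha) (hJ.isSubbrace.neg_mem hb)))
  | mul p q ihp ihq =>
    obtain ⟨ha, hb, hr⟩ := ihp
    obtain ⟨hc, hd, hs⟩ := ihq
    set a := p.eval i (0 : B)
    set b := p.eval (0 : B) j
    set c := q.eval i (0 : B)
    set d := q.eval (0 : B) j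
    refine ⟨hI.isSubbrace.mul_mem ha hc, hJ.isSubbrace.mul_mem hb hd, ?_⟩
    show sbRel (commIdeal I J) (p.eval i j * q.eval i j) (a * c + b * d)
    have r1 : sbRel (commIdeal I J) (p.eval i j * q.eval i j) ((a + b) * (c + d)) :=
      sbRel.mul hK hr hs
    have r2 : sbRel (commIdeal I J) ((a + b) * (c + d)) ((a * b) * (c * d)) :=
      sbRel.mul hK (sbRel.symm hK (sb_comm_mul_add ha hb))
        (sbRel.symm hK (sb_comm_mul_add hc hd))
    have e1 : (a * b) * (c * d) = a * (b * c) * d := by group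
    have r3 : sbRel (commIdeal I J) (a * (b * c) * d) (a * (c * b) * d) :=
      sbRel.mul hK
        (sbRel.mul hK (sbRel.refl hK a) (sbRel.symm hK (sb_comm_mul_comm hc hb)))
        (sbRel.refl hK d)
    have e2 : a * (c * b) * d = (a * c) * (b * d) := by group
    have r4 : sbRel (commIdeal I J) ((a * c) * (b * d)) (a * c + b * d) :=
      sb_comm_mul_add (hI.isSubbrace.mul_mem ha hc) (hJ.isSubbrace.mul_mem hb hd)
    rw [e1] at r2
    rw [e2] at r3
    exact sbRel.trans hK r1 (sbRel.trans hK r2 (sbRel.trans hK r3 r4))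
  | inv p ihp =>
    obtain ⟨ha, hb, hr⟩ := ihp
    set a := p.eval i (0 : B)
    set b := p.eval (0 : B) j
    refine ⟨hI.isSubbrace.inv_mem ha, hJ.isSubbrace.inv_mem hb, ?_⟩
    show sbRel (commIdeal I J) ((p.eval i j)⁻¹) (a⁻¹ + b⁻¹)
    have r1 : sbRel (commIdeal I J) ((p.eval i j)⁻¹) ((a + b)⁻¹) :=
      sbRel.inv hK hr
    have r2 : sbRel (commIdeal I J) ((a + b)⁻¹) (b⁻¹ * a⁻¹) := by
      have := sbRel.inv hK (sbRel.symm hK (sb_comm_mul_add ha hb))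
      rwa [mul_inv_rev] at this
    have r3 : sbRel (commIdeal I J) (b⁻¹ * a⁻¹) (a⁻¹ * b⁻¹) :=
      sbRel.symm hK
        (sb_comm_mul_comm (hI.isSubbrace.inv_mem ha) (hJ.isSubbrace.inv_mem hb))
    have r4 : sbRel (commIdeal I J) (a⁻¹ * b⁻¹) (a⁻¹ + b⁻¹) :=
      sb_comm_mul_add (hI.isSubbrace.inv_mem ha) (hJ.isSubbrace.inv_mem hb)
    exact sbRel.trans hK r1 (sbRel.trans hK r2 (sbRel.trans hK r3 r4))

end CommIdeal

end Aux

/-- For ideals `I`, `J` of a left skew brace `B`, the commutator ideal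
`[I,J]^B` equals the ideal generated by the values of absorbing 2-polynomials. -/
theorem commIdeal_eq_absorbing_ideal {B : Type u} [SkewBrace B]
    (I J : Set B) (hI : IsIdeal I) (hJ : IsIdeal J) :
    commIdeal I J =
      idealClosure {z : B | ∃ p : Poly2, p.Absorbing B ∧ ∃ i ∈ I, ∃ j ∈ J, z = p.eval i j} := by
  set E : Set B :=
    {z : B | ∃ p : Poly2, p.Absorbing B ∧ ∃ i ∈ I, ∃ j ∈ J, z = p.eval i j} with hEdef
  have h0r : ∀ x : B, x * 0 = x := fun x => by
    rw [SkewBrace.zero_eq_one, mul_one]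
  have h0l : ∀ x : B, (0 : B) * x = x := fun x => by
    rw [SkewBrace.zero_eq_one, one_mul]
  have h0inv : ((0 : B))⁻¹ = 0 := by
    rw [SkewBrace.zero_eq_one, inv_one]
  have h10 : (1 : B) = 0 := (SkewBrace.zero_eq_one).symm
  -- the three polynomial witnesses
  have habsAdd : (Poly2.add (Poly2.add (Poly2.add (Poly2.neg Poly2.X)
      (Poly2.neg Poly2.Y)) Poly2.X) Poly2.Y).Absorbing B := by
    constructor <;> intro x <;> simp [Poly2.eval]
  have habsMul : (Poly2.mul (Poly2.mul (Poly2.mul (Poly2.inv Poly2.X)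
      (Poly2.inv Poly2.Y)) Poly2.X) Poly2.Y).Absorbing B := by
    constructor <;> intro x <;>
      simp [Poly2.eval, h0r, h0l, h0inv, inv_mul_cancel, h10]
  have habsStar : (Poly2.add (Poly2.mul Poly2.X Poly2.Y)
      (Poly2.neg (Poly2.add Poly2.X Poly2.Y))).Absorbing B := by
    constructor <;> intro x <;> simp [Poly2.eval, h0r, h0l]
  have hKE := sb_isIdeal_idealClosure (B := B) E
  have hKC : IsIdeal (commIdeal I J) := sb_isIdeal_idealClosure _
  apply Set.Subset.antisymm
  · -- commIdeal I J ⊆ idealClosure E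
    apply sb_idealClosure_min hKE
    rintro x (hx | hx)
    · rcases hx with hx | hx
      · -- additive commutators
        let T : AddSubgroup B :=
          { carrier := idealClosure E
            add_mem' := fun ha hb => hKE.isSubbrace.add_mem ha hb
            zero_mem' := hKE.isSubbrace.zero_mem
            neg_mem' := fun ha => hKE.isSubbrace.neg_mem ha }
        have hle : AddSubgroup.closure
            {x : B | ∃ i ∈ I, ∃ j ∈ J, x = addCommutator i j} ≤ T := by
          rw [AddSubgroup.closure_le]
          rintro y ⟨i, hi, j, hj, rfl⟩
          apply sb_subset_idealClosure
          exact ⟨_, habsAdd, i, hi, j, hj, rfl⟩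
        exact hle hx
      · -- multiplicative commutators
        let T : Subgroup B :=
          { carrier := idealClosure E
            mul_mem' := fun ha hb => hKE.isSubbrace.mul_mem ha hb
            one_mem' := by
              rw [← SkewBrace.zero_eq_one]; exact hKE.isSubbrace.zero_mem
            inv_mem' := fun ha => hKE.isSubbrace.inv_mem ha }
        have hle : Subgroup.closure
            {x : B | ∃ i ∈ I, ∃ j ∈ J, x = mulCommutator i j} ≤ T := by
          rw [Subgroup.closure_le]
          rintro y ⟨i, hi, j, hj, rfl⟩
          apply sb_subset_idealClosure
          exact ⟨_, habsMul, i, hi, j, hj, rfl⟩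
        exact hle hx
    · -- star-type generators
      rcases hx with ⟨i, hi, j, hj, rfl⟩
      apply sb_subset_idealClosure
      exact ⟨_, habsStar, i, hi, j, hj, rfl⟩
  · -- idealClosure E ⊆ commIdeal I J
    apply sb_idealClosure_min hKC
    rintro z ⟨p, ⟨habs1, habs2⟩, i, hi, j, hj, rfl⟩
    obtain ⟨-, -, hr⟩ := sb_key hI hJ p hi hj
    rw [habs1 i, habs2 j, add_zero] at hr
    have := hKC.isSubbrace.neg_mem hr
    simpa using this
end

section
/- A left skew brace B is centrally nilpotent of class at most c if and only if every finitely generated subbrace of B is centrally nilpotent of class at most c. -/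
universe u

open SkewBrace

namespace CNAux

open SkewBrace

variable {B : Type u} [SkewBrace B]

lemma zero_mul' (b : B) : (0 : B) * b = b := by rw [zero_eq_one, one_mul]
lemma mul_zero' (b : B) : b * (0 : B) = b := by rw [zero_eq_one, mul_one]
lemma inv_zero' : ((0 : B))⁻¹ = 0 := by rw [zero_eq_one, inv_one]

lemma isSubbrace_subbraceClosure (E : Set B) : IsSubbrace (subbraceClosure E) := by
  constructor
  · exact fun T hT => hT.1.zero_mem
  · exact fun a b ha hb T hT => hT.1.add_mem (ha T hT) (hb T hT)
  · exact fun a ha T hT => hT.1.neg_mem (ha T hT)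
  · exact fun a b ha hb T hT => hT.1.mul_mem (ha T hT) (hb T hT)
  · exact fun a ha T hT => hT.1.inv_mem (ha T hT)

lemma subset_subbraceClosure (E : Set B) : E ⊆ subbraceClosure E :=
  fun x hx T hT => hT.2 hx

/-! ### Congruence modulo an ideal -/

def Rel (Z : Set B) (a b : B) : Prop := -a + b ∈ Z

section Rel

variable {Z : Set B} (hZ : IsIdeal Z)
include hZ

lemma rel_refl (a : B) : Rel Z a a := by
  simpa [Rel] using hZ.isSubbrace.zero_mem

lemma rel_symm {a b : B} (h : Rel Z a b) : Rel Z b a := by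
  have := hZ.isSubbrace.neg_mem h
  simpa [Rel, neg_add_rev] using this

lemma rel_trans {a b c : B} (h1 : Rel Z a b) (h2 : Rel Z b c) : Rel Z a c := by
  have := hZ.isSubbrace.add_mem h1 h2
  simpa [Rel, add_assoc] using this

lemma mem_of_rel {a b : B} (ha : a ∈ Z) (h : Rel Z a b) : b ∈ Z := by
  have := hZ.isSubbrace.add_mem ha h
  simpa using this

lemma rel_add {a a' b b' : B} (h1 : Rel Z a a') (h2 : Rel Z b b') :
    Rel Z (a + b) (a' + b') := by
  have hc : -b + (-a + a') + -(-b) ∈ Z := hZ.add_conj_mem (Set.mem_univ (-b)) h1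
  have := hZ.isSubbrace.add_mem hc h2
  simpa [Rel, neg_add_rev, add_assoc, add_neg_cancel_left, neg_add_cancel_left] using this

lemma rel_neg {a b : B} (h : Rel Z a b) : Rel Z (-a) (-b) := by
  have hc : a + (-b + a) + -a ∈ Z := hZ.add_conj_mem (Set.mem_univ a) (rel_symm hZ h)
  simpa [Rel, add_assoc, add_neg_cancel_left, neg_add_cancel_left, add_neg_cancel] using hc

lemma lam_mem {z : B} (x : B) (hz : z ∈ Z) : -x + x * z ∈ Z := by
  have h1 : sbStar x z ∈ Z := hZ.star_mem_left (Set.mem_univ x) hz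
  have := hZ.isSubbrace.add_mem h1 hz
  simpa [sbStar, add_assoc, neg_add_cancel_left, add_neg_cancel_left] using this

lemma rel_iff_mul {a b : B} : Rel Z a b ↔ a⁻¹ * b ∈ Z := by
  constructor
  · intro h
    have hb : b = a + (-a + b) := by simp
    have := lam_mem hZ a⁻¹ h
    rw [hb, skew_distrib, inv_mul_cancel, ← zero_eq_one, zero_add]
    exact this
  · intro h
    have hb : b = a * (a⁻¹ * b) := by rw [← mul_assoc, mul_inv_cancel, one_mul]
    have := lam_mem hZ a h
    show -a + b ∈ Z
    rw [show (-a + b : B) = -a + a * (a⁻¹ * b) by rw [← hb]]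
    exact this

lemma rel_mul {a a' b b' : B} (h1 : Rel Z a a') (h2 : Rel Z b b') :
    Rel Z (a * b) (a' * b') := by
  rw [rel_iff_mul hZ] at h1 h2 ⊢
  have hc : b⁻¹ * (a⁻¹ * a') * b⁻¹⁻¹ ∈ Z := hZ.mul_conj_mem (Set.mem_univ b⁻¹) h1
  have := hZ.isSubbrace.mul_mem hc h2
  have key : (a * b)⁻¹ * (a' * b') = (b⁻¹ * (a⁻¹ * a') * b⁻¹⁻¹) * (b⁻¹ * b') := by
    group
  rw [key]; exact this

lemma rel_inv {a b : B} (h : Rel Z a b) : Rel Z a⁻¹ b⁻¹ := by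
  rw [rel_iff_mul hZ] at h ⊢
  have hc : a * (a⁻¹ * b)⁻¹ * a⁻¹ ∈ Z :=
    hZ.mul_conj_mem (Set.mem_univ a) (hZ.isSubbrace.inv_mem h)
  have key : a⁻¹⁻¹ * b⁻¹ = a * (a⁻¹ * b)⁻¹ * a⁻¹ := by group
  rw [key]; exact hc

end Rel

/-! ### The centre modulo an ideal -/

def nextCentre (Z : Set B) : Set B :=
  {a : B | ∀ b : B, -(a + b) + (b + a) ∈ Z ∧ -(a + b) + a * b ∈ Z ∧ -(a + b) + b * a ∈ Z}

section NextCentre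

variable {Z : Set B} (hZ : IsIdeal Z)
include hZ

lemma mem_nextCentre_iff {a : B} :
    a ∈ nextCentre Z ↔ ∀ b : B, Rel Z (a + b) (b + a) ∧ Rel Z (a + b) (a * b) ∧
      Rel Z (a + b) (b * a) := Iff.rfl

lemma nextCentre_sat {a a' : B} (ha : a ∈ nextCentre Z) (h : Rel Z a a') :
    a' ∈ nextCentre Z := by
  intro b
  have e1 : Rel Z (a' + b) (a + b) := rel_add hZ (rel_symm hZ h) (rel_refl hZ b)
  refine ⟨?_, ?_, ?_⟩
  · exact rel_trans hZ (rel_trans hZ e1 (ha b).1) (rel_add hZ (rel_refl hZ b) h)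
  · exact rel_trans hZ (rel_trans hZ e1 (ha b).2.1) (rel_mul hZ h (rel_refl hZ b))
  · exact rel_trans hZ (rel_trans hZ e1 (ha b).2.2) (rel_mul hZ (rel_refl hZ b) h)

lemma zero_mem_nextCentre : (0 : B) ∈ nextCentre Z := by
  intro b
  refine ⟨?_, ?_, ?_⟩ <;>
    simp [Rel, zero_mul', mul_zero', hZ.isSubbrace.zero_mem]

lemma subset_nextCentre : Z ⊆ nextCentre Z := by
  intro z hz
  refine nextCentre_sat hZ (zero_mem_nextCentre hZ) ?_
  simpa [Rel] using hz

lemma add_mem_nextCentre {a a' : B} (ha : a ∈ nextCentre Z) (ha' : a' ∈ nextCentre Z) :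
    a + a' ∈ nextCentre Z := by
  intro b
  have comm : Rel Z (a + a' + b) (b + (a + a')) := by
    have h1 : Rel Z (a + (a' + b)) (a + (b + a')) := rel_add hZ (rel_refl hZ a) (ha' b).1
    have h2 : Rel Z ((a + b) + a') ((b + a) + a') := rel_add hZ (ha b).1 (rel_refl hZ a')
    have h2' : Rel Z (a + (b + a')) (b + (a + a')) := by
      simpa [add_assoc] using h2
    simpa [add_assoc] using rel_trans hZ h1 h2'
  refine ⟨comm, ?_, ?_⟩
  · -- (a + a') + b ≡ (a + a') * b
    refine rel_symm hZ ?_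
    have s1 : Rel Z ((a + a') * b) ((a * a') * b) :=
      rel_mul hZ (ha a').2.1 (rel_refl hZ b)
    have s2 : Rel Z (a * (a' * b)) (a * (a' + b)) :=
      rel_mul hZ (rel_refl hZ a) (rel_symm hZ (ha' b).2.1)
    have s3 : Rel Z (a * (a' + b)) (a + a' + (-a + (a + b))) := by
      rw [skew_distrib]
      exact rel_add hZ (rel_symm hZ (ha a').2.1)
        (rel_add hZ (rel_refl hZ (-a)) (rel_symm hZ (ha b).2.1))
    have s4 : Rel Z (a + ((a' + -a) + (a + b))) (a + ((-a + a') + (a + b))) :=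
      rel_add hZ (rel_refl hZ a) (rel_add hZ (ha' (-a)).1 (rel_refl hZ (a + b)))
    have s4' : Rel Z (a + a' + (-a + (a + b))) (a' + (a + b)) := by
      simpa [add_assoc, neg_add_cancel_left] using s4
    have s5 : Rel Z ((a' + a) + b) ((a + a') + b) :=
      rel_add hZ (ha' a).1 (rel_refl hZ b)
    have s5' : Rel Z (a' + (a + b)) (a + a' + b) := by
      simpa [add_assoc] using s5
    have := rel_trans hZ s1 (by
      simpa [mul_assoc] using rel_trans hZ s2 (rel_trans hZ s3 (rel_trans hZ s4' s5')))
    exact this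
  · -- (a + a') + b ≡ b * (a + a')
    refine rel_symm hZ ?_
    have t1 : Rel Z (b * (a + a')) ((b + a) + (-b + (b + a'))) := by
      rw [skew_distrib]
      exact rel_add hZ (rel_trans hZ (rel_symm hZ (ha b).2.2) (ha b).1)
        (rel_add hZ (rel_refl hZ (-b))
          (rel_trans hZ (rel_symm hZ (ha' b).2.2) (ha' b).1))
    have t1' : Rel Z (b * (a + a')) (b + (a + a')) := by
      simpa [add_assoc, neg_add_cancel_left] using t1
    exact rel_trans hZ t1' (rel_symm hZ comm)

lemma neg_mem_nextCentre {a : B} (ha : a ∈ nextCentre Z) : -a ∈ nextCentre Z := by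
  have hinv : Rel Z a⁻¹ (-a) := by
    have r : Rel Z (a + a⁻¹) 0 := by
      have := (ha a⁻¹).2.1
      rwa [mul_inv_cancel, ← zero_eq_one] at this
    have := rel_add hZ (rel_refl hZ (-a)) r
    simpa [neg_add_cancel_left] using this
  intro b
  have comm : Rel Z (-a + b) (b + -a) := by
    have h := rel_add hZ (rel_refl hZ (-a))
      (rel_add hZ (rel_symm hZ (ha b).1) (rel_refl hZ (-a)))
    simpa [add_assoc, neg_add_cancel_left, add_neg_cancel_left, add_neg_cancel,
      neg_add_cancel] using h
  refine ⟨comm, ?_, ?_⟩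
  · -- -a + b ≡ (-a) * b
    refine rel_symm hZ ?_
    have u1 : Rel Z ((-a) * b) (a⁻¹ * b) :=
      rel_mul hZ (rel_symm hZ hinv) (rel_refl hZ b)
    have u2 : Rel Z (a + a⁻¹ * b) b := by
      have := (ha (a⁻¹ * b)).2.1
      rwa [← mul_assoc, mul_inv_cancel, one_mul] at this
    have u3 : Rel Z (a⁻¹ * b) (-a + b) := by
      have := rel_add hZ (rel_refl hZ (-a)) u2
      simpa [neg_add_cancel_left] using this
    exact rel_trans hZ u1 u3
  · -- -a + b ≡ b * (-a)
    refine rel_symm hZ ?_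
    have v1 : Rel Z (b * (-a)) (b * a⁻¹) :=
      rel_mul hZ (rel_refl hZ b) (rel_symm hZ hinv)
    have v2 : Rel Z (b * a⁻¹ + a) b := by
      have w1 : Rel Z (a + b * a⁻¹) ((b * a⁻¹) * a) := (ha (b * a⁻¹)).2.2
      have w2 : Rel Z (a + b * a⁻¹) (b * a⁻¹ + a) := (ha (b * a⁻¹)).1
      have := rel_trans hZ (rel_symm hZ w2) w1
      rwa [mul_assoc, inv_mul_cancel, mul_one] at this
    have v3 : Rel Z (b * a⁻¹) (b + -a) := by
      have := rel_add hZ v2 (rel_refl hZ (-a))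
      simpa [add_assoc, add_neg_cancel, add_zero, add_neg_cancel_left] using this
    exact rel_trans hZ (rel_trans hZ v1 v3) (rel_symm hZ comm)

lemma isIdeal_nextCentre : IsIdeal (nextCentre Z) := by
  have hsat := fun {a a' : B} => nextCentre_sat (Z := Z) hZ (a := a) (a' := a')
  refine ⟨Set.subset_univ _, ?_, ?_, ?_, ?_, ?_⟩
  · refine ⟨zero_mem_nextCentre hZ, fun a b ha hb => add_mem_nextCentre hZ ha hb,
      fun a ha => neg_mem_nextCentre hZ ha, ?_, ?_⟩
    · intro a b ha hb
      exact hsat (add_mem_nextCentre hZ ha hb) (ha b).2.1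
    · intro a ha
      have hinv : Rel Z (-a) a⁻¹ := by
        have r : Rel Z (a + a⁻¹) 0 := by
          have := (ha a⁻¹).2.1
          rwa [mul_inv_cancel, ← zero_eq_one] at this
        have := rel_add hZ (rel_refl hZ (-a)) r
        exact rel_symm hZ (by simpa [neg_add_cancel_left] using this)
      exact hsat (neg_mem_nextCentre hZ ha) hinv
  · intro b _ a ha
    have h : Rel Z a (b + a + -b) := by
      have := rel_add hZ (rel_symm hZ (ha b).1) (rel_refl hZ (-b))
      exact rel_symm hZ (by simpa [add_assoc, add_neg_cancel, add_zero] using this)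
    exact hsat ha h
  · intro b _ a ha
    have h : Rel Z a (b * a * b⁻¹) := by
      have h1 : Rel Z (b * a) (a * b) :=
        rel_trans hZ (rel_symm hZ (ha b).2.2) (ha b).2.1
      have := rel_mul hZ h1 (rel_refl hZ b⁻¹)
      exact rel_symm hZ (by simpa [mul_assoc, mul_inv_cancel, mul_one] using this)
    exact hsat ha h
  · intro b _ a ha
    have h : Rel Z 0 (sbStar b a) := by
      have h1 : Rel Z (b * a) (b + a) :=
        rel_trans hZ (rel_symm hZ (ha b).2.2) (ha b).1
      have := rel_add hZ (rel_add hZ (rel_refl hZ (-b)) h1) (rel_refl hZ (-a))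
      exact rel_symm hZ (by
        simpa [sbStar, add_assoc, neg_add_cancel_left, neg_add_cancel, add_neg_cancel]
          using this)
    exact hsat (zero_mem_nextCentre hZ) h
  · intro a ha b _
    have h : Rel Z 0 (sbStar a b) := by
      have h1 : Rel Z (a * b) (a + b) := rel_symm hZ (ha b).2.1
      have := rel_add hZ (rel_add hZ (rel_refl hZ (-a)) h1) (rel_refl hZ (-b))
      exact rel_symm hZ (by
        simpa [sbStar, add_assoc, neg_add_cancel_left, neg_add_cancel, add_neg_cancel]
          using this)
    exact hsat (zero_mem_nextCentre hZ) h

end NextCentre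

/-! ### The trivial ideal and the upper central series -/

lemma isIdeal_singleton_zero : IsIdeal ({0} : Set B) := by
  refine ⟨Set.subset_univ _, ⟨rfl, ?_, ?_, ?_, ?_⟩, ?_, ?_, ?_, ?_⟩
  · intro a b ha hb
    simp_all [Set.mem_singleton_iff]
  · intro a ha
    simp_all [Set.mem_singleton_iff]
  · intro a b ha hb
    simp_all [Set.mem_singleton_iff, zero_mul']
  · intro a ha
    simp_all [Set.mem_singleton_iff, inv_zero']
  · intro b _ a ha
    simp_all [Set.mem_singleton_iff]
  · intro b _ a ha
    rw [Set.mem_singleton_iff] at ha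
    subst ha
    simp [Set.mem_singleton_iff, mul_zero', mul_inv_cancel, ← zero_eq_one]
  · intro b _ a ha
    rw [Set.mem_singleton_iff] at ha
    subst ha
    simp [Set.mem_singleton_iff, sbStar, mul_zero']
  · intro a ha b _
    rw [Set.mem_singleton_iff] at ha
    subst ha
    simp [Set.mem_singleton_iff, sbStar, zero_mul']

lemma zetaNat_succ (n : ℕ) : zetaNat B (n + 1) = nextCentre (zetaNat B n) := rfl

lemma isIdeal_zetaNat : ∀ n : ℕ, IsIdeal (zetaNat B n)
  | 0 => isIdeal_singleton_zero
  | n + 1 => by rw [zetaNat_succ]; exact isIdeal_nextCentre (isIdeal_zetaNat n)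

lemma zetaNat_subset_succ (n : ℕ) : zetaNat B n ⊆ zetaNat B (n + 1) := by
  rw [zetaNat_succ]; exact subset_nextCentre (isIdeal_zetaNat n)

/-! ### Finite iterates -/

def AllIter (S : Set B) : ℕ → B → Prop
  | 0, a => a = 0
  | n + 1, a => ∀ b ∈ S, AllIter S n (-(a + b) + (b + a)) ∧
      AllIter S n (-(a + b) + a * b) ∧ AllIter S n (-(a + b) + b * a)

def iterStep (a : B) (p : B × Fin 3) : B :=
  if p.2 = 0 then -(a + p.1) + (p.1 + a)
  else if p.2 = 1 then -(a + p.1) + a * p.1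
  else -(a + p.1) + p.1 * a

def iterVal : B → List (B × Fin 3) → B
  | a, [] => a
  | a, p :: l => iterVal (iterStep a p) l

lemma allIter_iff_iterVal (S : Set B) : ∀ (n : ℕ) (a : B),
    AllIter S n a ↔ ∀ l : List (B × Fin 3), l.length = n →
      (∀ p ∈ l, p.1 ∈ S) → iterVal a l = 0 := by
  intro n
  induction n with
  | zero =>
    intro a
    constructor
    · intro h l hl _
      rw [List.length_eq_zero_iff] at hl
      subst hl; exact h
    · intro h
      exact h [] rfl (by simp)
  | succ n ih =>
    intro a
    constructor
    · intro h l hl hmem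
      match l with
      | ⟨b, i⟩ :: l' =>
        have hb : b ∈ S := hmem _ List.mem_cons_self
        have hl' : l'.length = n := by simpa using hl
        have hmem' : ∀ p ∈ l', p.1 ∈ S := fun p hp => hmem p (List.mem_cons_of_mem _ hp)
        have htriple := h b hb
        fin_cases i
        · exact (ih _).mp htriple.1 l' hl' hmem'
        · exact (ih _).mp htriple.2.1 l' hl' hmem'
        · exact (ih _).mp htriple.2.2 l' hl' hmem'
    · intro h b hb
      have hmemc : ∀ i : Fin 3, ∀ p ∈ ((b, i) :: ([] : List (B × Fin 3))), True := fun _ _ _ => trivial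
      refine ⟨(ih _).mpr ?_, (ih _).mpr ?_, (ih _).mpr ?_⟩
      · intro l hl hmem
        have := h ((b, (0 : Fin 3)) :: l) (by simp [hl]) (by
          intro p hp
          rcases List.mem_cons.mp hp with rfl | hp'
          exacts [hb, hmem p hp'])
        simpa [iterVal, iterStep] using this
      · intro l hl hmem
        have := h ((b, (1 : Fin 3)) :: l) (by simp [hl]) (by
          intro p hp
          rcases List.mem_cons.mp hp with rfl | hp'
          exacts [hb, hmem p hp'])
        simpa [iterVal, iterStep] using this
      · intro l hl hmem
        have := h ((b, (2 : Fin 3)) :: l) (by simp [hl]) (by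
          intro p hp
          rcases List.mem_cons.mp hp with rfl | hp'
          exacts [hb, hmem p hp'])
        simpa [iterVal, iterStep] using this

lemma mem_zetaNat_iff : ∀ (n : ℕ) (a : B), a ∈ zetaNat B n ↔ AllIter Set.univ n a := by
  intro n
  induction n with
  | zero => intro a; exact Set.mem_singleton_iff
  | succ n ih =>
    intro a
    constructor
    · intro h b _
      exact ⟨(ih _).mp (h b).1, (ih _).mp (h b).2.1, (ih _).mp (h b).2.2⟩
    · intro h b
      have := h b (Set.mem_univ b)
      exact ⟨(ih _).mpr this.1, (ih _).mpr this.2.1, (ih _).mpr this.2.2⟩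

lemma allIter_of_chain {S : Set B} {I : ℕ → Set B} {c : ℕ}
    (hI0 : I 0 = {0}) (hcent : ∀ k < c, IsCentralFactorIn S (I k) (I (k + 1))) :
    ∀ n, n ≤ c → ∀ x ∈ I n, AllIter S n x := by
  intro n
  induction n with
  | zero =>
    intro _ x hx
    rw [hI0] at hx
    exact hx
  | succ n ih =>
    intro hn x hx b hb
    have h := hcent n (Nat.lt_of_succ_le hn) hx hb
    have hn' : n ≤ c := Nat.le_of_succ_le hn
    exact ⟨ih hn' _ h.1, ih hn' _ h.2.1, ih hn' _ h.2.2⟩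

end CNAux


/-- `B` is centrally nilpotent of class at most `c` iff every finitely
generated subbrace is centrally nilpotent of class at most `c`. -/
theorem centrallyNilpotent_classLE_iff_fg {B : Type u} [SkewBrace B] (c : ℕ) :
    CentrallyNilpotentInOfClassLE (Set.univ : Set B) c ↔
      ∀ E : Finset B, CentrallyNilpotentInOfClassLE (subbraceClosure (E : Set B)) c := by
  constructor
  · -- forward: restrict a central chain to the subbrace
    rintro ⟨I, hI0, hIc, hid, hmono, hcent⟩ E
    have hS : IsSubbrace (subbraceClosure (E : Set B)) :=
      CNAux.isSubbrace_subbraceClosure _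
    set S := subbraceClosure (E : Set B) with hSdef
    refine ⟨fun k => I k ∩ S, ?_, ?_, ?_, ?_, ?_⟩
    · show I 0 ∩ S = {0}
      rw [hI0]
      exact Set.inter_eq_self_of_subset_left (Set.singleton_subset_iff.mpr hS.zero_mem)
    · show I c ∩ S = S
      rw [hIc, Set.univ_inter]
    · intro k hk
      obtain ⟨-, hsub, hconj, hmconj, hstl, hstr⟩ := hid k hk
      refine ⟨Set.inter_subset_right, ?_, ?_, ?_, ?_, ?_⟩
      · exact ⟨⟨hsub.zero_mem, hS.zero_mem⟩,
          fun a b ha hb => ⟨hsub.add_mem ha.1 hb.1, hS.add_mem ha.2 hb.2⟩,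
          fun a ha => ⟨hsub.neg_mem ha.1, hS.neg_mem ha.2⟩,
          fun a b ha hb => ⟨hsub.mul_mem ha.1 hb.1, hS.mul_mem ha.2 hb.2⟩,
          fun a ha => ⟨hsub.inv_mem ha.1, hS.inv_mem ha.2⟩⟩
      · intro b hb a ha
        exact ⟨hconj (Set.mem_univ b) ha.1,
          hS.add_mem (hS.add_mem hb ha.2) (hS.neg_mem hb)⟩
      · intro b hb a ha
        exact ⟨hmconj (Set.mem_univ b) ha.1,
          hS.mul_mem (hS.mul_mem hb ha.2) (hS.inv_mem hb)⟩
      · intro b hb a ha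
        exact ⟨hstl (Set.mem_univ b) ha.1,
          hS.add_mem (hS.add_mem (hS.neg_mem hb) (hS.mul_mem hb ha.2)) (hS.neg_mem ha.2)⟩
      · intro a ha b hb
        exact ⟨hstr ha.1 (Set.mem_univ b),
          hS.add_mem (hS.add_mem (hS.neg_mem ha.2) (hS.mul_mem ha.2 hb)) (hS.neg_mem hb)⟩
    · intro k hk
      exact Set.inter_subset_inter_left _ (hmono k hk)
    · intro k hk a ha b hb
      have h := hcent k hk ha.1 (Set.mem_univ b)
      have hbS : b ∈ S := hb
      have haS : a ∈ S := ha.2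
      refine ⟨⟨h.1, ?_⟩, ⟨h.2.1, ?_⟩, ⟨h.2.2, ?_⟩⟩
      · exact hS.add_mem (hS.neg_mem (hS.add_mem haS hbS)) (hS.add_mem hbS haS)
      · exact hS.add_mem (hS.neg_mem (hS.add_mem haS hbS)) (hS.mul_mem haS hbS)
      · exact hS.add_mem (hS.neg_mem (hS.add_mem haS hbS)) (hS.mul_mem hbS haS)
  · -- reverse: the upper central series reaches `univ` in `c` steps
    intro h
    classical
    refine ⟨fun k => zetaNat B k, rfl, ?_, fun k _ => CNAux.isIdeal_zetaNat k,
      fun k _ => CNAux.zetaNat_subset_succ k, fun k _ => ?_⟩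
    · rw [Set.eq_univ_iff_forall]
      intro a
      rw [CNAux.mem_zetaNat_iff, CNAux.allIter_iff_iterVal]
      intro l hl _
      set E : Finset B := insert a (l.map Prod.fst).toFinset with hE
      obtain ⟨I, hI0, hIc, -, -, hcent⟩ := h E
      have haS : a ∈ subbraceClosure (E : Set B) :=
        CNAux.subset_subbraceClosure _ (by simp [hE])
      have hx : a ∈ I c := by rw [hIc]; exact haS
      have hall := CNAux.allIter_of_chain hI0 hcent c le_rfl a hx
      refine (CNAux.allIter_iff_iterVal _ c a).mp hall l hl ?_
      intro p hp
      refine CNAux.subset_subbraceClosure _ ?_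
      simp only [hE, Finset.coe_insert, Set.mem_insert_iff, Finset.mem_coe,
        List.mem_toFinset, List.mem_map]
      exact Or.inr ⟨p, hp, rfl⟩
    · intro a ha b _
      exact ha b
end

section
/- Let B be a locally centrally-nilpotent left skew brace and let I be a minimal ideal of B. Then I ≤ ζ(B); consequently, I is a cyclic group of prime order. -/
universe u

open SkewBrace

section AuxiliaryLemmas

namespace SkewBrace

variable {B : Type u} [SkewBrace B]

/-- Inductively defined ideal closure of `E` relative to `S` (parameters taken in `S`). -/
inductive GenIn (S E : Set B) : B → Prop
  | base : ∀ {x}, x ∈ E → GenIn S E x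
  | zero : GenIn S E 0
  | add : ∀ {x y}, GenIn S E x → GenIn S E y → GenIn S E (x + y)
  | neg : ∀ {x}, GenIn S E x → GenIn S E (-x)
  | mul : ∀ {x y}, GenIn S E x → GenIn S E y → GenIn S E (x * y)
  | inv : ∀ {x}, GenIn S E x → GenIn S E x⁻¹
  | conj_add : ∀ {b x}, b ∈ S → GenIn S E x → GenIn S E (b + x + -b)
  | conj_mul : ∀ {b x}, b ∈ S → GenIn S E x → GenIn S E (b * x * b⁻¹)
  | star_left : ∀ {b x}, b ∈ S → GenIn S E x → GenIn S E (sbStar b x)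
  | star_right : ∀ {x b}, GenIn S E x → b ∈ S → GenIn S E (sbStar x b)

lemma genIn_subset {S E J : Set B} (hJ : IsIdealIn S J) (hEJ : E ⊆ J) :
    ∀ {x : B}, GenIn S E x → x ∈ J := by
  intro x hx
  induction hx with
  | base h => exact hEJ h
  | zero => exact hJ.isSubbrace.zero_mem
  | add _ _ ih1 ih2 => exact hJ.isSubbrace.add_mem ih1 ih2
  | neg _ ih => exact hJ.isSubbrace.neg_mem ih
  | mul _ _ ih1 ih2 => exact hJ.isSubbrace.mul_mem ih1 ih2
  | inv _ ih => exact hJ.isSubbrace.inv_mem ih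
  | conj_add hb _ ih => exact hJ.add_conj_mem hb ih
  | conj_mul hb _ ih => exact hJ.mul_conj_mem hb ih
  | star_left hb _ ih => exact hJ.star_mem_left hb ih
  | star_right _ hb ih => exact hJ.star_mem_right ih hb

lemma isIdeal_genIn (E : Set B) : IsIdeal {x : B | GenIn Set.univ E x} := by
  refine ⟨Set.subset_univ _,
    ⟨GenIn.zero, fun a b ha hb => GenIn.add ha hb, fun a ha => GenIn.neg ha,
      fun a b ha hb => GenIn.mul ha hb, fun a ha => GenIn.inv ha⟩,
    ?_, ?_, ?_, ?_⟩
  · intro b _ a ha; exact GenIn.conj_add (Set.mem_univ b) ha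
  · intro b _ a ha; exact GenIn.conj_mul (Set.mem_univ b) ha
  · intro b _ a ha; exact GenIn.star_left (Set.mem_univ b) ha
  · intro a ha b _; exact GenIn.star_right ha (Set.mem_univ b)

lemma genIn_finite {E : Set B} :
    ∀ {x : B}, GenIn Set.univ E x →
      ∃ F : Finset B, ∀ S : Set B, ↑F ⊆ S → GenIn S E x := by
  classical
  intro x hx
  induction hx with
  | base h => exact ⟨∅, fun S _ => GenIn.base h⟩
  | zero => exact ⟨∅, fun S _ => GenIn.zero⟩
  | add _ _ ih1 ih2 =>
      obtain ⟨F1, h1⟩ := ih1; obtain ⟨F2, h2⟩ := ih2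
      refine ⟨F1 ∪ F2, fun S hS => ?_⟩
      rw [Finset.coe_union, Set.union_subset_iff] at hS
      exact GenIn.add (h1 S hS.1) (h2 S hS.2)
  | neg _ ih =>
      obtain ⟨F, h⟩ := ih; exact ⟨F, fun S hS => GenIn.neg (h S hS)⟩
  | mul _ _ ih1 ih2 =>
      obtain ⟨F1, h1⟩ := ih1; obtain ⟨F2, h2⟩ := ih2
      refine ⟨F1 ∪ F2, fun S hS => ?_⟩
      rw [Finset.coe_union, Set.union_subset_iff] at hS
      exact GenIn.mul (h1 S hS.1) (h2 S hS.2)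
  | inv _ ih =>
      obtain ⟨F, h⟩ := ih; exact ⟨F, fun S hS => GenIn.inv (h S hS)⟩
  | @conj_add b _ _ _ ih =>
      obtain ⟨F, h⟩ := ih
      refine ⟨insert b F, fun S hS => ?_⟩
      rw [Finset.coe_insert, Set.insert_subset_iff] at hS
      exact GenIn.conj_add hS.1 (h S hS.2)
  | @conj_mul b _ _ _ ih =>
      obtain ⟨F, h⟩ := ih
      refine ⟨insert b F, fun S hS => ?_⟩
      rw [Finset.coe_insert, Set.insert_subset_iff] at hS
      exact GenIn.conj_mul hS.1 (h S hS.2)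
  | @star_left b _ _ _ ih =>
      obtain ⟨F, h⟩ := ih
      refine ⟨insert b F, fun S hS => ?_⟩
      rw [Finset.coe_insert, Set.insert_subset_iff] at hS
      exact GenIn.star_left hS.1 (h S hS.2)
  | @star_right _ b _ _ ih =>
      obtain ⟨F, h⟩ := ih
      refine ⟨insert b F, fun S hS => ?_⟩
      rw [Finset.coe_insert, Set.insert_subset_iff] at hS
      exact GenIn.star_right (h S hS.2) hS.1

lemma mem_subbraceClosure_iff {E : Set B} {x : B} :
    x ∈ subbraceClosure E ↔ ∀ S : Set B, IsSubbrace S → E ⊆ S → x ∈ S := by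
  rw [subbraceClosure, Set.mem_sInter]
  constructor
  · intro h S hS hES; exact h S ⟨hS, hES⟩
  · intro h S hS; exact h S hS.1 hS.2

lemma subset_subbraceClosure (E : Set B) : E ⊆ subbraceClosure E :=
  fun _x hx => mem_subbraceClosure_iff.mpr fun _S _ hES => hES hx

lemma isSubbrace_subbraceClosure (E : Set B) : IsSubbrace (subbraceClosure E) where
  zero_mem := mem_subbraceClosure_iff.mpr fun _S hS _ => hS.zero_mem
  add_mem := fun _a _b ha hb => mem_subbraceClosure_iff.mpr fun S hS hE =>
    hS.add_mem (mem_subbraceClosure_iff.mp ha S hS hE) (mem_subbraceClosure_iff.mp hb S hS hE)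
  neg_mem := fun _a ha => mem_subbraceClosure_iff.mpr fun S hS hE =>
    hS.neg_mem (mem_subbraceClosure_iff.mp ha S hS hE)
  mul_mem := fun _a _b ha hb => mem_subbraceClosure_iff.mpr fun S hS hE =>
    hS.mul_mem (mem_subbraceClosure_iff.mp ha S hS hE) (mem_subbraceClosure_iff.mp hb S hS hE)
  inv_mem := fun _a ha => mem_subbraceClosure_iff.mpr fun S hS hE =>
    hS.inv_mem (mem_subbraceClosure_iff.mp ha S hS hE)

lemma comm_in_ideal {I : Set B} (hI : IsIdeal I) {a : B} (ha : a ∈ I) (b : B) :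
    (-(a + b) + (b + a) ∈ I) ∧ (-(a + b) + a * b ∈ I) ∧ (-(a + b) + b * a ∈ I) := by
  have h1 : -(a + b) + (b + a) = ((-b) + (-a) + -(-b)) + a := by
    simp only [neg_add_rev, neg_neg, add_assoc]
  have h2 : -(a + b) + a * b = (-b) + (sbStar a b) + -(-b) := by
    simp only [sbStar, neg_add_rev, neg_neg, add_assoc, neg_add_cancel, add_zero,
      neg_add_cancel_left, add_neg_cancel_left]
  have h3 : -(a + b) + b * a = (((-b) + (-a) + -(-b)) + sbStar b a) + a := by
    simp only [sbStar, neg_add_rev, neg_neg, add_assoc, neg_add_cancel, add_zero,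
      neg_add_cancel_left, add_neg_cancel_left]
  refine ⟨?_, ?_, ?_⟩
  · rw [h1]
    exact hI.isSubbrace.add_mem
      (hI.add_conj_mem (Set.mem_univ _) (hI.isSubbrace.neg_mem ha)) ha
  · rw [h2]
    exact hI.add_conj_mem (Set.mem_univ _) (hI.star_mem_right ha (Set.mem_univ b))
  · rw [h3]
    exact hI.isSubbrace.add_mem
      (hI.isSubbrace.add_mem (hI.add_conj_mem (Set.mem_univ _) (hI.isSubbrace.neg_mem ha))
        (hI.star_mem_left (Set.mem_univ b) ha)) ha

lemma comm_eq_zero {I : Set B} (hB : LocallyCentrallyNilpotent B) (hI : IsIdeal I)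
    (hmin : ∀ K : Set B, IsIdeal K → K ⊆ I → K = ({0} : Set B) ∨ K = I)
    {a : B} (ha : a ∈ I) (b c : B)
    (hc : c = -(a + b) + (b + a) ∨ c = -(a + b) + a * b ∨ c = -(a + b) + b * a) :
    c = 0 := by
  classical
  by_contra hc0
  have hcI : c ∈ I := by
    obtain ⟨h1, h2, h3⟩ := comm_in_ideal hI ha b
    rcases hc with h | h | h <;> rw [h] <;> assumption
  have hCI : {x : B | GenIn Set.univ ({c} : Set B) x} = I := by
    rcases hmin _ (isIdeal_genIn {c})
        (fun x hx => genIn_subset hI (Set.singleton_subset_iff.mpr hcI) hx) with h | h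
    · exfalso
      have hcmem : c ∈ {x : B | GenIn Set.univ ({c} : Set B) x} := GenIn.base rfl
      rw [h] at hcmem
      exact hc0 hcmem
    · exact h
  have haC : GenIn Set.univ ({c} : Set B) a := by
    have : a ∈ {x : B | GenIn Set.univ ({c} : Set B) x} := hCI ▸ ha
    exact this
  obtain ⟨F, hF⟩ := genIn_finite haC
  set Fab : Finset B := insert a (insert b F) with hFabdef
  set S : Set B := subbraceClosure (↑Fab : Set B) with hSdef
  have haS : a ∈ S := subset_subbraceClosure _ (by simp [hFabdef])
  have hbS : b ∈ S := subset_subbraceClosure _ (by simp [hFabdef])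
  have hFS : (↑F : Set B) ⊆ S := fun x hx =>
    subset_subbraceClosure _ (by simp [hFabdef]; right; right; exact hx)
  obtain ⟨n, Ich, hI0, hIn, hideal, _hmono, hcentral⟩ := hB Fab
  have key : ∀ k : ℕ, a ∈ Ich (n - k) := by
    intro k
    induction k with
    | zero => rw [Nat.sub_zero, hIn]; exact haS
    | succ k ih =>
      rcases le_or_gt n k with h | h
      · have he : n - (k + 1) = n - k := by omega
        rw [he]; exact ih
      · have hm : n - k = (n - (k + 1)) + 1 := by omega
        rw [hm] at ih
        have hcm : c ∈ Ich (n - (k + 1)) := by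
          obtain ⟨h1, h2, h3⟩ := hcentral (n - (k + 1)) (by omega) ih hbS
          rcases hc with h' | h' | h' <;> rw [h'] <;> assumption
        exact genIn_subset (hideal (n - (k + 1)) (by omega))
          (Set.singleton_subset_iff.mpr hcm) (hF S hFS)
  have ha0 : a = 0 := by
    have hk := key n
    rw [Nat.sub_self, hI0] at hk
    exact hk
  apply hc0
  subst ha0
  have h0b : (0 : B) * b = b := by rw [zero_eq_one, one_mul]
  have hb0 : b * (0 : B) = b := by rw [zero_eq_one, mul_one]
  rcases hc with h | h | h <;> rw [h]
  · simp
  · rw [h0b]; simp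
  · rw [hb0]; simp

end SkewBrace

end AuxiliaryLemmas


/-- In a locally centrally-nilpotent brace, every minimal ideal is central
and is a cyclic group of prime order. -/
theorem minimal_ideal_central {B : Type u} [SkewBrace B]
    (hB : LocallyCentrallyNilpotent B) (I : Set B) (hI : IsIdeal I)
    (hne : I ≠ ({0} : Set B))
    (hmin : ∀ K : Set B, IsIdeal K → K ⊆ I → K = ({0} : Set B) ∨ K = I) :
    I ⊆ centre B ∧
      ∃ p : ℕ, p.Prime ∧ Nat.card ↥I = p ∧ ∃ a ∈ I, ∀ x ∈ I, x ∈ AddSubgroup.zmultiples a := by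
  classical
  have part1 : I ⊆ centre B := by
    intro a ha
    refine ⟨Set.mem_univ a, fun b _ => ?_⟩
    have h1 := comm_eq_zero hB hI hmin ha b _ (Or.inl rfl)
    have h2 := comm_eq_zero hB hI hmin ha b _ (Or.inr (Or.inl rfl))
    have h3 := comm_eq_zero hB hI hmin ha b _ (Or.inr (Or.inr rfl))
    exact ⟨neg_add_eq_zero.mp h1, neg_add_eq_zero.mp h2, neg_add_eq_zero.mp h3⟩
  have hmul : ∀ x ∈ I, ∀ b : B, b * x = b + x ∧ x * b = x + b ∧ x + b = b + x := by
    intro x hx b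
    obtain ⟨hcomm, hxb, hbx⟩ := (part1 hx).2 b (Set.mem_univ _)
    exact ⟨hbx.symm.trans hcomm, hxb.symm, hcomm⟩
  have hinv : ∀ x ∈ I, x⁻¹ = -x := by
    intro x hx
    have hc := (part1 hx).2 x⁻¹ (Set.mem_univ _)
    have hz : x + x⁻¹ = 0 := by rw [hc.2.1, mul_inv_cancel, ← zero_eq_one]
    exact (neg_eq_of_add_eq_zero_right hz).symm
  have subgroup_ideal : ∀ H : AddSubgroup B, (H : Set B) ⊆ I → IsIdeal (H : Set B) := by
    intro H hHI
    refine ⟨Set.subset_univ _,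
      ⟨H.zero_mem, fun x y hx hy => H.add_mem hx hy, fun x hx => H.neg_mem hx, ?_, ?_⟩,
      ?_, ?_, ?_, ?_⟩
    · intro x y hx hy
      have hxy := (hmul x (hHI hx) y).2.1
      rw [SetLike.mem_coe] at *
      rw [hxy]
      exact H.add_mem hx hy
    · intro x hx
      rw [SetLike.mem_coe] at *
      rw [hinv x (hHI hx)]
      exact H.neg_mem hx
    · intro b _ x hx
      have hcomm := (hmul x (hHI hx) b).2.2
      have he : b + x + -b = x := by rw [← hcomm, add_neg_cancel_right]
      rw [he]; exact hx
    · intro b _ x hx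
      have h1 := (hmul x (hHI hx) b).1
      have h2 := (hmul x (hHI hx) b).2.1
      have hcomm := (hmul x (hHI hx) b).2.2
      have he : b * x * b⁻¹ = x := by
        rw [h1, ← hcomm, ← h2, mul_inv_cancel_right]
      rw [he]; exact hx
    · intro b _ x hx
      have he : sbStar b x = 0 := by
        rw [sbStar, (hmul x (hHI hx) b).1, neg_add_cancel_left, add_neg_cancel]
      rw [SetLike.mem_coe] at *
      rw [he]; exact H.zero_mem
    · intro x hx b _
      have he : sbStar x b = 0 := by
        rw [sbStar, (hmul x (hHI hx) b).2.1, neg_add_cancel_left, add_neg_cancel]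
      rw [SetLike.mem_coe] at *
      rw [he]; exact H.zero_mem
  have h0I : (0 : B) ∈ I := hI.isSubbrace.zero_mem
  obtain ⟨a, haI, ha0⟩ : ∃ a ∈ I, a ≠ 0 := by
    by_contra h
    push_neg at h
    exact hne (Set.eq_singleton_iff_unique_mem.mpr ⟨h0I, fun x hx => h x hx⟩)
  have hzsmul : ∀ x, x ∈ I → ∀ k : ℤ, k • x ∈ I := by
    intro x hx k
    induction k using Int.induction_on with
    | zero => simpa using h0I
    | succ n ih => rw [add_zsmul, one_zsmul]; exact hI.isSubbrace.add_mem ih hx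
    | pred n ih =>
        rw [sub_zsmul, one_zsmul]
        exact hI.isSubbrace.add_mem ih (hI.isSubbrace.neg_mem hx)
  have hzsub : ∀ x ∈ I, (AddSubgroup.zmultiples x : Set B) ⊆ I := by
    intro x hx y hy
    obtain ⟨k, rfl⟩ := AddSubgroup.mem_zmultiples_iff.mp hy
    exact hzsmul x hx k
  have hgen : ∀ x, x ∈ I → x ≠ 0 → (AddSubgroup.zmultiples x : Set B) = I := by
    intro x hx hx0
    rcases hmin _ (subgroup_ideal _ (hzsub x hx)) (hzsub x hx) with h | h
    · exfalso
      have hm : x ∈ (AddSubgroup.zmultiples x : Set B) := AddSubgroup.mem_zmultiples x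
      rw [h] at hm
      exact hx0 hm
    · exact h
  have hdiv : ∀ y : B, y ∈ I → y ≠ 0 → ∃ k : ℤ, k • y = a := by
    intro y hy hy0
    have hEq := hgen y hy hy0
    have haz : a ∈ (AddSubgroup.zmultiples y : Set B) := hEq ▸ haI
    exact AddSubgroup.mem_zmultiples_iff.mp haz
  set p := addOrderOf a with hpdef
  have hpne0 : p ≠ 0 := by
    intro hp0
    have h2a : a + a ≠ 0 := by
      intro h
      have hfin : IsOfFinAddOrder a := by
        rw [isOfFinAddOrder_iff_nsmul_eq_zero]
        exact ⟨2, by norm_num, by rwa [two_nsmul]⟩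
      rw [← addOrderOf_pos_iff] at hfin
      omega
    obtain ⟨k, hk⟩ := hdiv (a + a) (hI.isSubbrace.add_mem haI haI) h2a
    rw [← two_zsmul, ← mul_zsmul'] at hk
    have hz : ((2 * k - 1) : ℤ) • a = 0 := by
      rw [sub_zsmul, one_zsmul, hk, add_neg_cancel]
    have hdvd : ((p : ℕ) : ℤ) ∣ (2 * k - 1) := addOrderOf_dvd_iff_zsmul_eq_zero.mpr hz
    rw [hp0] at hdvd
    norm_num at hdvd
    omega
  have hp1 : p ≠ 1 := by
    intro h1
    have hz := addOrderOf_nsmul_eq_zero a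
    rw [← hpdef, h1, one_nsmul] at hz
    exact ha0 hz
  have hprime : p.Prime := by
    rw [Nat.prime_def]
    refine ⟨by omega, fun m hm => ?_⟩
    by_contra hcon
    push_neg at hcon
    obtain ⟨hm1, hmp⟩ := hcon
    have hm0 : m ≠ 0 := by
      rintro rfl
      rw [zero_dvd_iff] at hm
      exact hpne0 hm
    have hy0 : (m : ℤ) • a ≠ 0 := by
      intro h
      have hd : ((p : ℕ) : ℤ) ∣ (m : ℤ) := addOrderOf_dvd_iff_zsmul_eq_zero.mpr h
      have hd' : p ∣ m := by exact_mod_cast hd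
      exact hmp (Nat.dvd_antisymm hm hd')
    have hyI : (m : ℤ) • a ∈ I := hzsmul a haI (m : ℤ)
    obtain ⟨k, hk⟩ := hdiv _ hyI hy0
    rw [← mul_zsmul'] at hk
    have hz : (((m : ℤ) * k - 1) : ℤ) • a = 0 := by
      rw [sub_zsmul, one_zsmul, hk, add_neg_cancel]
    have hdvd : ((p : ℕ) : ℤ) ∣ ((m : ℤ) * k - 1) := addOrderOf_dvd_iff_zsmul_eq_zero.mpr hz
    have hmd : (m : ℤ) ∣ ((p : ℕ) : ℤ) := Int.natCast_dvd_natCast.mpr hm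
    have hone : (m : ℤ) ∣ 1 := by
      have h1 : (m : ℤ) ∣ (m : ℤ) * k - 1 := hmd.trans hdvd
      have h2 : (m : ℤ) ∣ (m : ℤ) * k := dvd_mul_right _ _
      have := dvd_sub h2 h1
      simpa using this
    have : m ∣ 1 := by exact_mod_cast hone
    exact hm1 (Nat.dvd_one.mp this)
  refine ⟨part1, p, hprime, ?_, a, haI, ?_⟩
  · rw [← hgen a haI ha0]
    rw [show ↥((AddSubgroup.zmultiples a : AddSubgroup B) : Set B) =
      ↥(AddSubgroup.zmultiples a) from rfl]
    rw [Nat.card_zmultiples]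
  · intro x hx
    rw [← hgen a haI ha0] at hx
    exact hx
end
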